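/- Let q ≥ 1, let Λ_1 ≥ Λ_2 ≥ ... ≥ Λ_q > 0 be real numbers, let r be the Witsenhausen index of (Λ_1,...,Λ_q), and let μ := (1/r)(1 + Σ_{j=1}^r 1/Λ_j). Define p_i := max(μ − 1/Λ_i, 0) for i = 1,...,q. Then Σ_{i=1}^q p_i = 1 and Π_{i=1}^q (1 + Λ_i p_i) = Π_{i=1}^r (μ Λ_i). -/

import Mathlib

/-!
For `i ≤ r` the monotonicity of `1 / Λ` and the Witsenhausen inequality at `k = r` give
`1 / Λ i ≤ 1 / Λ r < μ`; for `i > r` the inequality at `k = r + 1` rearranges to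
`μ ≤ 1 / Λ (r + 1) ≤ 1 / Λ i`. So exactly the first `r` powers are active, `p i = μ - 1 / Λ i`,
and both identities follow from `r μ = 1 + ∑_{j ≤ r} 1 / Λ j` and `1 + Λ i (μ - 1 / Λ i) = μ Λ i`.
-/

open Finset

noncomputable def waterLevel (Λ : ℕ → ℝ) (r : ℕ) : ℝ :=
  1 / (r : ℝ) * (1 + ∑ j ∈ Icc 1 r, 1 / Λ j)

theorem sum_Icc_waterLevel_sub {r : ℕ} (hr : r ≠ 0) (Λ : ℕ → ℝ) :
    ∑ i ∈ Icc 1 r, (waterLevel Λ r - 1 / Λ i) = 1 := by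
  rw [sum_sub_distrib, sum_const, Nat.card_Icc, Nat.add_sub_cancel, nsmul_eq_mul, waterLevel]
  field_simp
  ring

theorem waterLevel_le_of_waterLevel_succ_le {r : ℕ} (hr : r ≠ 0) {Λ : ℕ → ℝ}
    (h : waterLevel Λ (r + 1) ≤ 1 / Λ (r + 1)) : waterLevel Λ r ≤ 1 / Λ (r + 1) := by
  have hr' : (0 : ℝ) < r := by positivity
  rw [waterLevel, sum_Icc_succ_top (by omega), ← add_assoc, Nat.cast_succ, one_div_mul_eq_div,
    div_le_iff₀ (by positivity)] at h
  rw [waterLevel, one_div_mul_eq_div, div_le_iff₀ hr']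
  linarith

theorem monotoneOn_one_div_of_antitone_step {q : ℕ} {Λ : ℕ → ℝ}
    (hpos : ∀ k, 1 ≤ k → k ≤ q → 0 < Λ k)
    (hmono : ∀ k, 1 ≤ k → k + 1 ≤ q → Λ (k + 1) ≤ Λ k) :
    MonotoneOn (fun k ↦ 1 / Λ k) (Set.Icc 1 q) := by
  have hanti : AntitoneOn Λ (Set.Icc 1 q) :=
    antitoneOn_of_add_one_le Set.ordConnected_Icc fun k _ hk hk1 ↦ hmono k hk.1 hk1.2
  intro a ha b hb hab
  exact one_div_le_one_div_of_le (hpos b hb.1 hb.2) (hanti ha hb hab)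

section Ordered

variable {q r : ℕ} {Λ : ℕ → ℝ}

theorem one_div_lt_waterLevel (hinv : MonotoneOn (fun k ↦ 1 / Λ k) (Set.Icc 1 q))
    (hr1 : 1 ≤ r) (hrq : r ≤ q) (hup : 1 / Λ r < waterLevel Λ r) {i : ℕ}
    (hi : i ∈ Icc 1 r) : 1 / Λ i < waterLevel Λ r := by
  obtain ⟨hi1, hir⟩ := mem_Icc.mp hi
  exact (hinv ⟨hi1, hir.trans hrq⟩ ⟨hr1, hrq⟩ hir).trans_lt hup

theorem waterLevel_le_one_div (hinv : MonotoneOn (fun k ↦ 1 / Λ k) (Set.Icc 1 q))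
    (hr1 : 1 ≤ r) (hdown : ∀ k, r < k → k ≤ q → waterLevel Λ k ≤ 1 / Λ k) {i : ℕ}
    (hi : i ∈ Icc 1 q) (hir : i ∉ Icc 1 r) : waterLevel Λ r ≤ 1 / Λ i := by
  obtain ⟨hi1, hiq⟩ := mem_Icc.mp hi
  have hri : r < i := by simp only [mem_Icc, not_and, not_le] at hir; exact hir hi1
  have hlevel :=
    waterLevel_le_of_waterLevel_succ_le (by omega) (hdown (r + 1) r.lt_add_one (by omega))
  exact hlevel.trans (hinv ⟨by omega, by omega⟩ ⟨hi1, hiq⟩ hri)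

end Ordered

theorem waterfilling_value_general
    (q : ℕ) (Λ : ℕ → ℝ)
    (hpos : ∀ k, 1 ≤ k → k ≤ q → 0 < Λ k)
    (hmono : ∀ k, 1 ≤ k → k + 1 ≤ q → Λ (k + 1) ≤ Λ k)
    (r : ℕ) (hr1 : 1 ≤ r) (hrq : r ≤ q)
    (hup : ∀ k, 1 ≤ k → k ≤ r →
      1 / Λ k < (1 / (k : ℝ)) * (1 + ∑ j ∈ Finset.Icc 1 k, 1 / Λ j))
    (hdown : ∀ k, r < k → k ≤ q →
      (1 / (k : ℝ)) * (1 + ∑ j ∈ Finset.Icc 1 k, 1 / Λ j) ≤ 1 / Λ k)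
    (μ : ℝ) (hμ : μ = (1 / (r : ℝ)) * (1 + ∑ j ∈ Finset.Icc 1 r, 1 / Λ j))
    (p : ℕ → ℝ) (hp : ∀ i, p i = max (μ - 1 / Λ i) 0) :
    (∑ i ∈ Finset.Icc 1 q, p i = 1) ∧
    (∏ i ∈ Finset.Icc 1 q, (1 + Λ i * p i) = ∏ i ∈ Finset.Icc 1 r, (μ * Λ i)) := by
  change μ = waterLevel Λ r at hμ
  subst hμ
  have hinv := monotoneOn_one_div_of_antitone_step hpos hmono
  have hactive : ∀ i ∈ Icc 1 r, p i = waterLevel Λ r - 1 / Λ i := fun i hi ↦ by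
    rw [hp, max_eq_left (sub_nonneg.mpr (one_div_lt_waterLevel hinv hr1 hrq
      (hup r hr1 le_rfl) hi).le)]
  have hidle : ∀ i ∈ Icc 1 q, i ∉ Icc 1 r → p i = 0 := fun i hi hir ↦ by
    rw [hp, max_eq_right (sub_nonpos.mpr (waterLevel_le_one_div hinv hr1 hdown hi hir))]
  have hsub : Icc 1 r ⊆ Icc 1 q := Icc_subset_Icc_right hrq
  constructor
  · rw [← sum_subset hsub hidle, sum_congr rfl hactive]
    exact sum_Icc_waterLevel_sub (by omega) Λ
  · rw [← prod_subset hsub fun i hi hir ↦ by rw [hidle i hi hir, mul_zero, add_zero]]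
    refine prod_congr rfl fun i hi ↦ ?_
    have hΛ : Λ i ≠ 0 := (hpos i (mem_Icc.mp hi).1 ((mem_Icc.mp hi).2.trans hrq)).ne'
    rw [hactive i hi]
    field_simp
    ring

/-- The water-filling allocation `p_i := max(μ - 1/Λ_i, 0)` satisfies
`∑_{i=1}^q p_i = 1` and `∏_{i=1}^q (1 + Λ_i p_i) = ∏_{i=1}^r (μ Λ_i)`. -/
theorem waterfilling_value
    (q : ℕ) (hq : 1 ≤ q) (Λ : ℕ → ℝ)
    (hpos : ∀ k, 1 ≤ k → k ≤ q → 0 < Λ k)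
    (hmono : ∀ k, 1 ≤ k → k + 1 ≤ q → Λ (k + 1) ≤ Λ k)
    (r : ℕ) (hr1 : 1 ≤ r) (hrq : r ≤ q)
    (hup : ∀ k, 1 ≤ k → k ≤ r →
      1 / Λ k < (1 / (k : ℝ)) * (1 + ∑ j ∈ Finset.Icc 1 k, 1 / Λ j))
    (hdown : ∀ k, r < k → k ≤ q →
      (1 / (k : ℝ)) * (1 + ∑ j ∈ Finset.Icc 1 k, 1 / Λ j) ≤ 1 / Λ k)
    (μ : ℝ) (hμ : μ = (1 / (r : ℝ)) * (1 + ∑ j ∈ Finset.Icc 1 r, 1 / Λ j))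
    (p : ℕ → ℝ) (hp : ∀ i, p i = max (μ - 1 / Λ i) 0) :
    (∑ i ∈ Finset.Icc 1 q, p i = 1) ∧
    (∏ i ∈ Finset.Icc 1 q, (1 + Λ i * p i) = ∏ i ∈ Finset.Icc 1 r, (μ * Λ i)) :=
  waterfilling_value_general q Λ hpos hmono r hr1 hrq hup hdown μ hμ p hp
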